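/- For every real t with |t| < π/2, the series ∑_{n=0}^∞ K n 3 · tⁿ/n! converges and its sum equals (3/(1 − sin t)³)·( sin t·(3·sin t + 7) − t·cos t·(5 + sin t) ); that is, the exponential generating function for the multiboundary singularities B_n^3 is K_3(t) = 3( sin t(3 sin t + 7) − t cos t(5 + sin t) )/(1 − sin t)³. (The paper misprints the overall constant 3 as 7; the constant 3 is the correct one, as verified by the coefficients K 1 3 = 6 and K 3 3 = 348.) -/

import Mathlib

/-- The Bernoulli–Euler (zigzag, up-down) numbers: `A 0 = 1`, `A 1 = 1`, and
`2 * A (n+1) = ∑ k in range (n+1), (n.choose k) * A k * A (n-k)`. -/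
def A : ℕ → ℕ
  | 0 => 1
  | 1 => 1
  | n + 2 =>
      (∑ k ∈ (Finset.range (n + 2)).attach,
        Nat.choose (n + 1) k.1 * A k.1 * A (n + 1 - k.1)) / 2
decreasing_by
  · have := Finset.mem_range.mp k.2; omega
  · have := Finset.mem_range.mp k.2; omega

/-- `K n l` : number of connected components of the space of very nice
M-morsifications of the multiboundary singularity `B_n^l`, extended by the
recurrence `K n (l+1) = K (n+2) l − (n+2)·l·K (n+2) (l−1)` for `l ≥ 1`,
with `K n 0 = A (n-1)` for `n ≥ 1`, `K n 0 = 0` for `n ≤ 0`,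
and `K n 1 = K (n+2) 0`. -/
def K : ℤ → ℕ → ℤ
  | n, 0 => if 1 ≤ n then (A (n - 1).toNat : ℤ) else 0
  | n, 1 => K (n + 2) 0
  | n, (l + 2) => K (n + 2) (l + 1) - (n + 2) * (l + 1) * K (n + 2) l

/-!
With `u z = 1 / (1 - sin z)`, the function `g z = cos z / (1 - sin z) = sec z + tan z` satisfies
`g' = u` and `u' = g u`, so `g'' = g g'`. Leibniz' rule at `0` turns this into the recurrence
`A (n + 2) = ∑ k ≤ n, C(n, k) A k A (n + 1 - k)`, which is equivalent to the defining one; hence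
`g` is the exponential generating function of `A`. Unfolding `K` gives
`K n 3 = A (n + 5) - (3 n + 8) A (n + 3)`, whose generating function is
`g⁽⁵⁾ - 3 z g⁽⁴⁾ - 8 g⁽³⁾`; writing these derivatives as polynomials in `g` and `u` and using
`cos² = 1 - sin²` identifies it with the closed form. The closed form is holomorphic on
`‖z‖ < π / 2`, since `sin z = 1` only at `π / 2 + 2 k π`, so its Taylor series converges there.
-/

open Finset

lemma A_add_two (n : ℕ) :
    A (n + 2) = (∑ k ∈ range (n + 2), (n + 1).choose k * A k * A (n + 1 - k)) / 2 := by
  rw [A, sum_attach (range (n + 2)) fun k => (n + 1).choose k * A k * A (n + 1 - k)]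

-- Pascal's rule splits the defining sum into two halves that are reflections of each other.
lemma A_add_two_eq_sum (n : ℕ) :
    A (n + 2) = ∑ k ∈ range (n + 1), n.choose k * A k * A (n + 1 - k) := by
  have hreflect : ∑ k ∈ range (n + 1), n.choose k * A (k + 1) * A (n - k) =
      ∑ k ∈ range (n + 1), n.choose k * A k * A (n + 1 - k) := by
    rw [← sum_range_reflect]
    refine sum_congr rfl fun k hk => ?_
    have hk : k ≤ n := Nat.lt_succ_iff.mp (mem_range.mp hk)
    rw [show n + 1 - 1 - k = n - k by omega, Nat.choose_symm hk,
      show n - k + 1 = n + 1 - k by omega, show n - (n - k) = k by omega]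
    ring
  have hsplit := sum_choose_succ_mul (R := ℕ) (fun i j => A i * A j) n
  simp only [Nat.cast_id, ← mul_assoc, hreflect] at hsplit
  rw [A_add_two, hsplit, ← two_mul, Nat.mul_div_cancel_left _ two_pos]

lemma K_three (n : ℕ) : K n 3 = A (n + 5) - (3 * n + 8) * A (n + 3) := by
  simp only [K, show (1 : ℤ) ≤ n + 2 + 2 + 2 ∧ (1 : ℤ) ≤ n + 2 + 2 by omega, if_true]
  rw [show ((n : ℤ) + 2 + 2 + 2 - 1).toNat = n + 5 by omega,
    show ((n : ℤ) + 2 + 2 - 1).toNat = n + 3 by omega]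
  ring

section IteratedDeriv

variable {𝕜 : Type*} [NontriviallyNormedField 𝕜]

lemma iteratedDeriv_iteratedDeriv (m n : ℕ) (f : 𝕜 → 𝕜) :
    iteratedDeriv m (iteratedDeriv n f) = iteratedDeriv (m + n) f := by
  simp only [iteratedDeriv_eq_iterate, Function.iterate_add_apply]

lemma Set.EqOn.iteratedDeriv_add_one {s : Set 𝕜} (hs : IsOpen s) {f φ ψ : 𝕜 → 𝕜} {n : ℕ}
    (h : Set.EqOn (iteratedDeriv n f) φ s) (hφ : ∀ z ∈ s, HasDerivAt φ (ψ z) z) :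
    Set.EqOn (iteratedDeriv (n + 1) f) ψ s := fun z hz => by
  rw [iteratedDeriv_succ, (Filter.eventuallyEq_of_mem (hs.mem_nhds hz) h).deriv_eq,
    (hφ z hz).deriv]

lemma iteratedDeriv_id_mul_zero {f : 𝕜 → 𝕜} {n : ℕ} (hf : ContDiffAt 𝕜 n f 0) :
    iteratedDeriv n (fun z => z * f z) 0 = n * iteratedDeriv (n - 1) f 0 := by
  rw [iteratedDeriv_fun_mul (f := fun z => z) contDiffAt_fun_id hf]
  rcases n with _ | n <;> simp [iteratedDeriv_fun_id_zero]

end IteratedDeriv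

section Zigzag

open Complex Set
open scoped Real

noncomputable def zigzag (z : ℂ) : ℂ := cos z / (1 - sin z)

noncomputable def zigzagDeriv (z : ℂ) : ℂ := (1 - sin z)⁻¹

lemma isOpen_sin_ne_one : IsOpen {z : ℂ | sin z ≠ 1} :=
  isOpen_ne_fun continuous_sin continuous_const

lemma sin_ne_one_of_norm_lt {z : ℂ} (hz : ‖z‖ < π / 2) : sin z ≠ 1 := by
  intro h
  obtain ⟨k, rfl⟩ := sin_eq_one_iff.mp h
  have hk : π / 2 ≤ |π / 2 + k * (2 * π)| := by
    rcases le_or_gt 0 k with hk | hk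
    · rw [abs_of_nonneg (by positivity)]
      nlinarith [Real.pi_pos, (Int.cast_nonneg (R := ℝ) hk)]
    · have : (k : ℝ) ≤ -1 := by exact_mod_cast Int.le_sub_one_of_lt hk
      rw [abs_of_neg (by nlinarith [Real.pi_pos])]
      nlinarith [Real.pi_pos]
  have hreal : ((π / 2 + k * (2 * π) : ℝ) : ℂ) = π / 2 + k * (2 * π) := by push_cast; ring
  rw [← hreal, norm_real, Real.norm_eq_abs] at hz
  linarith

variable {z : ℂ}

lemma hasDerivAt_zigzag (hz : sin z ≠ 1) : HasDerivAt zigzag (zigzagDeriv z) z := by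
  have hne : 1 - sin z ≠ 0 := sub_ne_zero.mpr hz.symm
  refine ((hasDerivAt_cos z).div ((hasDerivAt_sin z).const_sub 1) hne).congr_deriv ?_
  rw [zigzagDeriv]
  field_simp
  linear_combination sin_sq_add_cos_sq z

lemma hasDerivAt_zigzagDeriv (hz : sin z ≠ 1) :
    HasDerivAt zigzagDeriv (zigzag z * zigzagDeriv z) z := by
  have hne : 1 - sin z ≠ 0 := sub_ne_zero.mpr hz.symm
  refine (((hasDerivAt_sin z).const_sub 1).inv hne).congr_deriv ?_
  rw [zigzag, zigzagDeriv]
  field_simp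

lemma analyticAt_zigzag (hz : sin z ≠ 1) : AnalyticAt ℂ zigzag z :=
  analyticAt_cos.div (analyticAt_const.sub analyticAt_sin) (sub_ne_zero.mpr hz.symm)

lemma eqOn_iteratedDeriv_one_zigzag :
    EqOn (iteratedDeriv 1 zigzag) zigzagDeriv {z | sin z ≠ 1} :=
  (eqOn_refl (iteratedDeriv 0 zigzag) _).iteratedDeriv_add_one isOpen_sin_ne_one
    fun _ hz => by simpa using hasDerivAt_zigzag hz

lemma eqOn_iteratedDeriv_two_zigzag :
    EqOn (iteratedDeriv 2 zigzag) (fun z => zigzag z * zigzagDeriv z) {z | sin z ≠ 1} :=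
  eqOn_iteratedDeriv_one_zigzag.iteratedDeriv_add_one isOpen_sin_ne_one
    fun _ hz => hasDerivAt_zigzagDeriv hz

lemma eqOn_iteratedDeriv_three_zigzag :
    EqOn (iteratedDeriv 3 zigzag) (fun z => zigzagDeriv z ^ 2 + zigzag z ^ 2 * zigzagDeriv z)
      {z | sin z ≠ 1} :=
  eqOn_iteratedDeriv_two_zigzag.iteratedDeriv_add_one isOpen_sin_ne_one fun _ hz =>
    ((hasDerivAt_zigzag hz).mul (hasDerivAt_zigzagDeriv hz)).congr_deriv (by ring)

lemma eqOn_iteratedDeriv_four_zigzag :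
    EqOn (iteratedDeriv 4 zigzag)
      (fun z => 4 * zigzag z * zigzagDeriv z ^ 2 + zigzag z ^ 3 * zigzagDeriv z)
      {z | sin z ≠ 1} :=
  eqOn_iteratedDeriv_three_zigzag.iteratedDeriv_add_one isOpen_sin_ne_one fun _ hz =>
    (((hasDerivAt_zigzagDeriv hz).fun_pow 2).add
      (((hasDerivAt_zigzag hz).fun_pow 2).mul (hasDerivAt_zigzagDeriv hz))).congr_deriv (by ring)

lemma eqOn_iteratedDeriv_five_zigzag :
    EqOn (iteratedDeriv 5 zigzag)
      (fun z => 4 * zigzagDeriv z ^ 3 + 11 * zigzag z ^ 2 * zigzagDeriv z ^ 2 +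
        zigzag z ^ 4 * zigzagDeriv z)
      {z | sin z ≠ 1} :=
  eqOn_iteratedDeriv_four_zigzag.iteratedDeriv_add_one isOpen_sin_ne_one fun _ hz =>
    ((((hasDerivAt_zigzag hz).const_mul 4).mul ((hasDerivAt_zigzagDeriv hz).fun_pow 2)).add
      (((hasDerivAt_zigzag hz).fun_pow 3).mul (hasDerivAt_zigzagDeriv hz))).congr_deriv (by ring)

lemma contDiffAt_iteratedDeriv_zigzag (k : ℕ) {n : WithTop ℕ∞} :
    ContDiffAt ℂ n (iteratedDeriv k zigzag) 0 := by
  rw [iteratedDeriv_eq_iterate]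
  exact ((analyticAt_zigzag (by simp)).iterated_deriv k).contDiffAt

lemma iteratedDeriv_zigzag_zero (n : ℕ) : iteratedDeriv n zigzag 0 = A n := by
  induction n using Nat.strong_induction_on with
  | _ n ih =>
    match n with
    | 0 => simp [zigzag, A]
    | 1 => simp [eqOn_iteratedDeriv_one_zigzag (by simp : sin 0 ≠ 1), zigzagDeriv, A]
    | n + 2 =>
      have hmul : iteratedDeriv 2 zigzag =ᶠ[nhds 0]
          fun z => zigzag z * iteratedDeriv 1 zigzag z :=
        Filter.eventuallyEq_of_mem (isOpen_sin_ne_one.mem_nhds (by simp)) fun z hz => by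
          rw [eqOn_iteratedDeriv_two_zigzag hz, eqOn_iteratedDeriv_one_zigzag hz]
      rw [← iteratedDeriv_iteratedDeriv, hmul.iteratedDeriv_eq,
        iteratedDeriv_fun_mul (by simpa using contDiffAt_iteratedDeriv_zigzag 0)
          (contDiffAt_iteratedDeriv_zigzag 1), A_add_two_eq_sum]
      push_cast
      refine sum_congr rfl fun k hk => ?_
      have hk : k ≤ n := Nat.lt_succ_iff.mp (mem_range.mp hk)
      rw [iteratedDeriv_iteratedDeriv, ih k (by omega), ih (n - k + 1) (by omega),
        show n - k + 1 = n + 1 - k by omega]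

noncomputable def egfKThree (z : ℂ) : ℂ :=
  3 / (1 - sin z) ^ 3 * (sin z * (3 * sin z + 7) - z * cos z * (5 + sin z))

lemma eqOn_egfKThree :
    EqOn egfKThree (fun z => iteratedDeriv 5 zigzag z - 3 * (z * iteratedDeriv 4 zigzag z) -
      8 * iteratedDeriv 3 zigzag z) {z | sin z ≠ 1} := fun z hz => by
  have hne : 1 - sin z ≠ 0 := sub_ne_zero.mpr (Ne.symm hz)
  simp only [eqOn_iteratedDeriv_five_zigzag hz, eqOn_iteratedDeriv_four_zigzag hz,
    eqOn_iteratedDeriv_three_zigzag hz, egfKThree, zigzag, zigzagDeriv]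
  field_simp
  linear_combination (9 * sin z ^ 2 - 5 * sin z - 4 + 3 * z * (1 - sin z) * cos z - cos z ^ 2) *
    sin_sq_add_cos_sq z

lemma iteratedDeriv_egfKThree_zero (n : ℕ) : iteratedDeriv n egfKThree 0 = K n 3 := by
  have h := Filter.eventuallyEq_of_mem
    (isOpen_sin_ne_one.mem_nhds (by simp : sin (0 : ℂ) ≠ 1)) eqOn_egfKThree
  have hc := fun k => contDiffAt_iteratedDeriv_zigzag k (n := n)
  rw [h.iteratedDeriv_eq, iteratedDeriv_fun_sub (by fun_prop) (by fun_prop),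
    iteratedDeriv_fun_sub (by fun_prop) (by fun_prop), iteratedDeriv_const_mul_field,
    iteratedDeriv_const_mul_field, iteratedDeriv_id_mul_zero (hc 4)]
  simp only [iteratedDeriv_iteratedDeriv, iteratedDeriv_zigzag_zero, K_three]
  rcases n with _ | n
  · simp
  · push_cast
    ring

lemma differentiableOn_egfKThree : DifferentiableOn ℂ egfKThree (Metric.ball 0 (π / 2)) := by
  intro z hz
  have hne : (1 - sin z) ^ 3 ≠ 0 :=
    pow_ne_zero 3 (sub_ne_zero.mpr (sin_ne_one_of_norm_lt (mem_ball_zero_iff.mp hz)).symm)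
  unfold egfKThree
  exact DifferentiableAt.differentiableWithinAt (by fun_prop (disch := exact hne))

end Zigzag

open Real in
/-- The exponential generating function for the multiboundary singularities `B_n^3`:
for `|t| < π/2`,
`∑ K n 3 · tⁿ/n! = 3( sin t(3 sin t + 7) − t cos t(5 + sin t) )/(1 − sin t)³`.
(The paper misprints the overall constant `3` as `7`.) -/
theorem egf_K_three (t : ℝ) (ht : |t| < π / 2) :
    HasSum (fun n : ℕ => (K n 3 : ℝ) * t ^ n / n.factorial)
      (3 / (1 - Real.sin t) ^ 3 *
        (Real.sin t * (3 * Real.sin t + 7) - t * Real.cos t * (5 + Real.sin t))) := by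
  have ht' : (t : ℂ) ∈ Metric.ball 0 (π / 2) := by simpa using ht
  have H := Complex.hasSum_taylorSeries_on_ball differentiableOn_egfKThree ht'
  simp only [iteratedDeriv_egfKThree_zero, sub_zero, smul_eq_mul, egfKThree] at H
  refine Complex.hasSum_ofReal.mp ?_
  push_cast
  exact H.congr_fun fun n => by ring
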